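/- Let T be a lattice triangle in Z^2 whose only lattice points on the boundary are its three vertices, and which contains exactly one lattice point p_r in its strict interior. Then p_r is the centroid: p_r = (p_i + p_j + p_k)/3, where p_i, p_j, p_k are the vertices. -/

import Mathlib

/-- Embedding of the lattice `ℤ²` into `ℝ²`. -/
def latticeEmbed (p : ℤ × ℤ) : ℝ × ℝ := ((p.1 : ℝ), (p.2 : ℝ))

/-!
Let `β` be the barycentric coordinates of the interior lattice point `p`. If `β i > 1/2` for
some vertex `vᵢ`, the reflection `2p - vᵢ` is a second interior lattice point; if `β i = 1/2`, it
is a lattice point on the edge opposite `vᵢ` with two positive coordinates, hence not a vertex.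
So every `β i < 1/2`, and then `v₁ + v₂ + v₃ - 2p`, whose coordinates are `1 - 2 β i`, is an
interior lattice point, which must be `p` itself.
-/

open Set

theorem affineIndependent_of_cross_ne_zero {a b c : ℝ × ℝ}
    (h : (b.1 - a.1) * (c.2 - a.2) - (b.2 - a.2) * (c.1 - a.1) ≠ 0) :
    AffineIndependent ℝ ![a, b, c] := by
  rw [affineIndependent_iff_linearIndependent_vsub ℝ _ (0 : Fin 3),
    ← linearIndependent_equiv (finSuccAboveEquiv (0 : Fin 3))]
  have hvec : (fun i : {i : Fin 3 // i ≠ 0} => ![a, b, c] i -ᵥ ![a, b, c] 0) ∘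
      finSuccAboveEquiv 0 = ![b - a, c - a] := by
    ext i : 1; fin_cases i <;> rfl
  rw [hvec, LinearIndependent.pair_iff]
  intro s t hst
  simp only [Prod.ext_iff, Prod.fst_add, Prod.snd_add, Prod.smul_fst, Prod.smul_snd,
    Prod.fst_sub, Prod.snd_sub, smul_eq_mul, Prod.fst_zero, Prod.snd_zero] at hst
  obtain ⟨h₁, h₂⟩ := hst
  constructor
  · refine (mul_eq_zero.1 ?_).resolve_right h
    linear_combination (c.2 - a.2) * h₁ - (c.1 - a.1) * h₂
  · refine (mul_eq_zero.1 ?_).resolve_right h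
    linear_combination (b.1 - a.1) * h₂ - (b.2 - a.2) * h₁

noncomputable def triangleBasis (a b c : ℝ × ℝ)
    (h : (b.1 - a.1) * (c.2 - a.2) - (b.2 - a.2) * (c.1 - a.1) ≠ 0) :
    AffineBasis (Fin 3) ℝ (ℝ × ℝ) :=
  ⟨![a, b, c], affineIndependent_of_cross_ne_zero h,
    (affineIndependent_of_cross_ne_zero h).affineSpan_eq_top_iff_card_eq_finrank_add_one.2
      (by simp)⟩

theorem coe_triangleBasis (a b c : ℝ × ℝ)
    (h : (b.1 - a.1) * (c.2 - a.2) - (b.2 - a.2) * (c.1 - a.1) ≠ 0) :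
    ⇑(triangleBasis a b c h) = ![a, b, c] := rfl

theorem AffineMap.map_sub_add {k V W : Type*} [Ring k] [AddCommGroup V] [Module k V]
    [AddCommGroup W] [Module k W] (f : V →ᵃ[k] W) (x y z : V) :
    f (x - y + z) = f x - f y + f z := by
  rw [← vadd_eq_add, f.map_vadd, ← vsub_eq_sub, f.linearMap_vsub, vsub_eq_sub, vadd_eq_add]

theorem AffineBasis.eq_of_coord_apply_pos {ι k P V : Type*} [Ring k] [Preorder k]
    [AddCommGroup V] [Module k V] [AddTorsor V P] (B : AffineBasis ι k P) {j l : ι}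
    (h : 0 < B.coord j (B l)) : j = l := by
  classical
  by_contra hjl
  rw [B.coord_apply, if_neg hjl] at h
  exact lt_irrefl 0 h

namespace AffineBasis

variable {V : Type*} [NormedAddCommGroup V] [NormedSpace ℝ V]
  (B : AffineBasis (Fin 3) ℝ V) {Λ : AddSubgroup V} {p : V}

theorem coord_two_smul_sub (i j : Fin 3) :
    B.coord j (2 • p - B i) = 2 * B.coord j p - if j = i then 1 else 0 := by
  rw [show 2 • p - B i = p - B i + p by abel, AffineMap.map_sub_add, B.coord_apply]
  ring

theorem coord_le_half_of_unique_interior (hB : ∀ i, B i ∈ Λ) (hpΛ : p ∈ Λ)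
    (hp : p ∈ interior (convexHull ℝ (range B)))
    (huniq : ∀ q ∈ Λ, q ∈ interior (convexHull ℝ (range B)) → q = p) (i : Fin 3) :
    B.coord i p ≤ 1 / 2 := by
  rw [B.interior_convexHull] at hp huniq
  by_contra! hi
  have hq : 2 • p - B i = p := by
    refine huniq _ (Λ.sub_mem (Λ.nsmul_mem hpΛ 2) (hB i)) fun j => ?_
    rw [coord_two_smul_sub]
    split_ifs with hji
    · subst hji; linarith
    · linarith [hp j]
  have hpi : p = B i := by linear_combination (norm := module) hq
  exact (by decide : ∀ i : Fin 3, i + 1 ≠ i) i (B.eq_of_coord_apply_pos (hpi ▸ hp (i + 1)))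

theorem coord_ne_half_of_frontier_subset (hB : ∀ i, B i ∈ Λ) (hpΛ : p ∈ Λ)
    (hp : p ∈ interior (convexHull ℝ (range B)))
    (hbdry : ∀ q ∈ Λ, q ∈ frontier (convexHull ℝ (range B)) → q ∈ range B) (i : Fin 3) :
    B.coord i p ≠ 1 / 2 := by
  rw [B.interior_convexHull] at hp
  intro hi
  have hcoord : ∀ j, j ≠ i → 0 < B.coord j (2 • p - B i) := fun j hji => by
    rw [coord_two_smul_sub, if_neg hji]
    linarith [hp j]
  have hfr : 2 • p - B i ∈ frontier (convexHull ℝ (range B)) := by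
    refine ⟨subset_closure ?_, ?_⟩
    · rw [B.convexHull_eq_nonneg_coord]
      intro j
      rw [coord_two_smul_sub]
      split_ifs with hji
      · subst hji; linarith
      · linarith [hp j]
    · rw [B.interior_convexHull]
      intro hpos
      have := hpos i
      rw [coord_two_smul_sub, hi, if_pos rfl] at this
      norm_num at this
  obtain ⟨k, hk⟩ := hbdry _ (Λ.sub_mem (Λ.nsmul_mem hpΛ 2) (hB i)) hfr
  have h₁ : i + 1 = k := B.eq_of_coord_apply_pos
    (hk ▸ hcoord _ ((by decide : ∀ i : Fin 3, i + 1 ≠ i) i))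
  have h₂ : i + 2 = k := B.eq_of_coord_apply_pos
    (hk ▸ hcoord _ ((by decide : ∀ i : Fin 3, i + 2 ≠ i) i))
  exact (by decide : ∀ i : Fin 3, i + 1 ≠ i + 2) i (h₁.trans h₂.symm)

theorem coord_sum_sub_two_smul (i : Fin 3) :
    B.coord i (∑ k, B k - 2 • p) = 1 - 2 * B.coord i p := by
  have hsum : ∑ k, B.coord i (B k) = 1 := by simp [B.coord_apply]
  rw [Fin.sum_univ_three, show B 0 + B 1 + B 2 - 2 • p = B 0 - p + B 1 - p + B 2 by abel,
    AffineMap.map_sub_add, AffineMap.map_sub_add, ← hsum, Fin.sum_univ_three]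
  ring

theorem three_smul_eq_sum_of_unique_interior (hB : ∀ i, B i ∈ Λ) (hpΛ : p ∈ Λ)
    (hp : p ∈ interior (convexHull ℝ (range B)))
    (hbdry : ∀ q ∈ Λ, q ∈ frontier (convexHull ℝ (range B)) → q ∈ range B)
    (huniq : ∀ q ∈ Λ, q ∈ interior (convexHull ℝ (range B)) → q = p) :
    (3 : ℤ) • p = ∑ i, B i := by
  have hlt : ∀ i, B.coord i p < 1 / 2 := fun i =>
    (B.coord_le_half_of_unique_interior hB hpΛ hp huniq i).lt_of_ne
      (B.coord_ne_half_of_frontier_subset hB hpΛ hp hbdry i)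
  have hq : ∑ k, B k - 2 • p = p := by
    refine huniq _ (Λ.sub_mem (Λ.sum_mem fun k _ => hB k) (Λ.nsmul_mem hpΛ 2)) ?_
    rw [B.interior_convexHull]
    intro i
    rw [coord_sum_sub_two_smul]
    linarith [hlt i]
  calc (3 : ℤ) • p = (∑ k, B k - 2 • p) + 2 • p := by rw [hq]; module
    _ = ∑ k, B k := sub_add_cancel _ _

end AffineBasis

def latticeEmbedHom : ℤ × ℤ →+ ℝ × ℝ := (Int.castAddHom ℝ).prodMap (Int.castAddHom ℝ)

theorem latticeEmbedHom_apply (p : ℤ × ℤ) : latticeEmbedHom p = latticeEmbed p := rfl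

theorem latticeEmbed_injective : Function.Injective latticeEmbed := fun p q h => by
  simp only [latticeEmbed, Prod.mk.injEq, Int.cast_inj] at h
  exact Prod.ext h.1 h.2

/-- A lattice triangle in `ℤ²` whose only boundary lattice points are its three
vertices and which contains exactly one lattice point in its strict interior
has that interior point equal to the centroid of the vertices. -/
theorem interior_point_of_onePointTriangle_is_centroid
    (v₁ v₂ v₃ : ℤ × ℤ)
    (hindep : (v₂.1 - v₁.1) * (v₃.2 - v₁.2) - (v₂.2 - v₁.2) * (v₃.1 - v₁.1) ≠ 0)
    (T : Set (ℝ × ℝ))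
    (hT : T = convexHull ℝ {latticeEmbed v₁, latticeEmbed v₂, latticeEmbed v₃})
    (hbdry : ∀ p : ℤ × ℤ, latticeEmbed p ∈ frontier T → p = v₁ ∨ p = v₂ ∨ p = v₃)
    (hint : ∃! p : ℤ × ℤ, latticeEmbed p ∈ interior T) :
    ∀ p : ℤ × ℤ, latticeEmbed p ∈ interior T → (3 : ℤ) • p = v₁ + v₂ + v₃ := by
  intro p hp
  have hcross : ((latticeEmbed v₂).1 - (latticeEmbed v₁).1) * ((latticeEmbed v₃).2 -
      (latticeEmbed v₁).2) - ((latticeEmbed v₂).2 - (latticeEmbed v₁).2) *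
      ((latticeEmbed v₃).1 - (latticeEmbed v₁).1) ≠ 0 := by
    simp only [latticeEmbed]; exact_mod_cast hindep
  set B := triangleBasis _ _ _ hcross
  have hTB : T = convexHull ℝ (range B) := by
    rw [hT, coe_triangleBasis, Matrix.range_cons, Matrix.range_cons_cons_empty,
      Set.singleton_union]
  subst hTB
  have key := B.three_smul_eq_sum_of_unique_interior (Λ := latticeEmbedHom.range)
    (fun i => by fin_cases i; exacts [⟨v₁, rfl⟩, ⟨v₂, rfl⟩, ⟨v₃, rfl⟩]) ⟨p, rfl⟩ hp
    (by
      rintro _ ⟨q, rfl⟩ hq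
      rcases hbdry q hq with rfl | rfl | rfl
      exacts [⟨0, rfl⟩, ⟨1, rfl⟩, ⟨2, rfl⟩])
    (by
      rintro _ ⟨q, rfl⟩ hq
      exact congrArg latticeEmbedHom (hint.unique hq hp))
  apply latticeEmbed_injective
  rw [← latticeEmbedHom_apply, ← latticeEmbedHom_apply, map_zsmul, map_add, map_add]
  rw [Fin.sum_univ_three] at key
  exact key
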